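/- arXiv:2508.17178 — 6 statements merged into one kernel-verified Lean document; each statement's English description precedes it below -/
import Mathlib

section
/- For any $\alpha \in (0,1)$, the function $q_2(\rho,\alpha) = \frac{1+\rho}{\alpha} + \rho - \rho^{2-\alpha/2} + 2^{-\alpha}\alpha + \frac{1}{2} - \alpha$ defined for $\rho \geq 1$ satisfies: $q_2$ has a unique critical point $g > 1$ with $q_2(g,\alpha) > 0$, $q_2(\rho,\alpha) \to -\infty$ as $\rho \to \infty$, and consequently there exists a unique $\rho^* \in (g, \infty)$ such that $q_2(\rho^*,\alpha) = 0$. -/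
/-!
Write `q₂(ρ) = a ρ + c - ρ^p` with `a = 1 + 1/α`, `c = 1/α + 2^(-α) α + 1/2 - α > 0` and
`p = 2 - α/2 ∈ (1, 2)`. Its derivative `a - p ρ^(p-1)` is strictly decreasing, so it vanishes
exactly at `g = (a/p)^(1/(p-1))`, and `g > 1` because `a > 2 > p`. Since `g^p = (a/p) g`, we get
`q₂(g) = a (1 - 1/p) g + c > 0`. Past `g` the function is strictly decreasing and it tends to
`-∞` because `p > 1`, so by the intermediate value theorem it has exactly one zero beyond `g`.
-/

open Set Filter

theorem existsUnique_zero_of_strictAntiOn_Ici {f : ℝ → ℝ} {g : ℝ}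
    (hcont : ContinuousOn f (Ici g)) (hanti : StrictAntiOn f (Ici g)) (hpos : 0 < f g)
    (htend : Tendsto f atTop atBot) : ∃! ρ, g < ρ ∧ f ρ = 0 := by
  obtain ⟨b, hb, hgb⟩ := ((htend.eventually (eventually_lt_atBot 0)).and
    (eventually_gt_atTop g)).exists
  obtain ⟨ρ, hρ, hfρ⟩ := intermediate_value_Icc' hgb.le (hcont.mono Icc_subset_Ici_self)
    ⟨hb.le, hpos.le⟩
  have hgρ : g < ρ := hρ.1.lt_of_ne (by rintro rfl; exact hpos.ne' hfρ)
  refine ⟨ρ, ⟨hgρ, hfρ⟩, fun y ⟨hgy, hfy⟩ => ?_⟩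
  exact hanti.injOn hgy.le hgρ.le (hfy.trans hfρ.symm)

section PowerDeficit

variable {a c p x : ℝ}

theorem hasDerivAt_mul_add_sub_rpow (hx : 0 < x) :
    HasDerivAt (fun ρ => a * ρ + c - ρ ^ p) (a - p * x ^ (p - 1)) x := by
  have h := (((hasDerivAt_id' x).const_mul a).add_const c).sub
    (Real.hasDerivAt_rpow_const (p := p) (Or.inl hx.ne'))
  rwa [mul_one] at h

theorem tendsto_mul_add_sub_rpow_atBot (hp : 1 < p) :
    Tendsto (fun ρ => a * ρ + c - ρ ^ p) atTop atBot := by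
  have hslope : Tendsto (fun ρ : ℝ => a + -ρ ^ (p - 1)) atTop atBot :=
    tendsto_atBot_add_const_left _ a
      (tendsto_neg_atTop_atBot.comp (tendsto_rpow_atTop (sub_pos.2 hp)))
  refine (tendsto_atBot_add_const_right _ c (tendsto_id.atTop_mul_atBot₀ hslope)).congr' ?_
  filter_upwards [eventually_gt_atTop 0] with ρ hρ
  have : ρ * ρ ^ (p - 1) = ρ ^ p := by
    rw [← Real.rpow_one_add' hρ.le (by linarith)]; ring_nf
  simp only [id_eq]
  linear_combination -this

theorem continuous_mul_add_sub_rpow (hp : 0 ≤ p) :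
    Continuous fun ρ : ℝ => a * ρ + c - ρ ^ p :=
  ((continuous_const.mul continuous_id).add continuous_const).sub (Real.continuous_rpow_const hp)

theorem rpow_sub_one_critPoint (ha : 0 ≤ a) (hp : 1 < p) :
    ((a / p) ^ (p - 1)⁻¹) ^ (p - 1) = a / p :=
  Real.rpow_inv_rpow (div_nonneg ha (by linarith)) (by linarith)

theorem sub_mul_rpow_eq_zero_iff (ha : 0 ≤ a) (hp : 1 < p) (hx : 0 ≤ x) :
    a - p * x ^ (p - 1) = 0 ↔ x = (a / p) ^ (p - 1)⁻¹ := by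
  rw [eq_comm (a := x), Real.rpow_inv_eq (div_nonneg ha (by linarith)) hx (by linarith),
    div_eq_iff (by linarith), sub_eq_zero, mul_comm p]

theorem one_lt_critPoint (hpa : p < a) (hp : 1 < p) : 1 < (a / p) ^ (p - 1)⁻¹ :=
  Real.one_lt_rpow ((one_lt_div (by linarith)).2 hpa) (inv_pos.2 (sub_pos.2 hp))

theorem mul_add_sub_rpow_critPoint_pos (ha : 0 ≤ a) (hc : 0 < c) (hp : 1 < p) :
    0 < a * (a / p) ^ (p - 1)⁻¹ + c - ((a / p) ^ (p - 1)⁻¹) ^ p := by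
  set g := (a / p) ^ (p - 1)⁻¹
  have hg : 0 ≤ g := Real.rpow_nonneg (div_nonneg ha (by linarith)) _
  -- `g ^ p = g * g ^ (p - 1) = (a / p) g`
  have hgp : g ^ p = g * (a / p) := by
    rw [← rpow_sub_one_critPoint ha hp, ← Real.rpow_one_add' hg (by linarith)]; ring_nf
  rw [hgp, show a * g + c - g * (a / p) = a * (1 - 1 / p) * g + c by ring]
  exact add_pos_of_nonneg_of_pos
    (mul_nonneg (mul_nonneg ha (sub_nonneg.2 ((div_le_one (by linarith)).2 hp.le))) hg) hc

theorem strictAntiOn_mul_add_sub_rpow (ha : 0 ≤ a) (hp : 1 < p) :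
    StrictAntiOn (fun ρ => a * ρ + c - ρ ^ p) (Ici ((a / p) ^ (p - 1)⁻¹)) := by
  set g := (a / p) ^ (p - 1)⁻¹
  have hg : 0 ≤ g := Real.rpow_nonneg (div_nonneg ha (by linarith)) _
  refine strictAntiOn_of_deriv_neg (convex_Ici g)
    (continuous_mul_add_sub_rpow (by linarith)).continuousOn fun x hx => ?_
  rw [interior_Ici, mem_Ioi] at hx
  have hgx : a / p < x ^ (p - 1) := by
    rw [← rpow_sub_one_critPoint ha hp]
    exact Real.rpow_lt_rpow hg hx (by linarith)
  rwa [(hasDerivAt_mul_add_sub_rpow (hg.trans_lt hx)).deriv, sub_neg,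
    ← div_lt_iff₀' (by linarith)]

end PowerDeficit

theorem stmt_2 (α : ℝ) (hα : α ∈ Set.Ioo (0:ℝ) 1) :
    ∃ g : ℝ, 1 < g ∧
      (1 + 1/α - (2 - α/2) * g ^ (1 - α/2) = 0) ∧
      (∀ g' : ℝ, 1 < g' → 1 + 1/α - (2 - α/2) * g' ^ (1 - α/2) = 0 → g' = g) ∧
      0 < (1+g)/α + g - g ^ (2 - α/2) + 2^(-α) * α + 1/2 - α ∧
      Tendsto (fun ρ : ℝ => (1+ρ)/α + ρ - ρ ^ (2 - α/2) + 2^(-α) * α + 1/2 - α)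
        atTop atBot ∧
      ∃! ρ : ℝ, g < ρ ∧ (1+ρ)/α + ρ - ρ ^ (2 - α/2) + 2^(-α) * α + 1/2 - α = 0 := by
  obtain ⟨hα0, hα1⟩ := hα
  have hinv : 1 < 1 / α := (one_lt_div hα0).2 hα1
  have hp : 1 < 2 - α / 2 := by linarith
  have ha : 0 ≤ 1 + 1 / α := by linarith
  have hc : 0 < 1 / α + 2 ^ (-α) * α + 1 / 2 - α := by
    nlinarith [Real.rpow_pos_of_pos two_pos (-α)]
  have hq (ρ : ℝ) : (1+ρ)/α + ρ - ρ ^ (2 - α/2) + 2^(-α) * α + 1/2 - α =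
      (1 + 1 / α) * ρ + (1 / α + 2 ^ (-α) * α + 1 / 2 - α) - ρ ^ (2 - α / 2) := by
    ring
  have hexp : 2 - α / 2 - 1 = 1 - α / 2 := by ring
  set g := ((1 + 1 / α) / (2 - α / 2)) ^ (2 - α / 2 - 1)⁻¹
  have hg : 1 < g := one_lt_critPoint (by linarith) hp
  have hcrit (x : ℝ) (hx : 1 < x) : 1 + 1/α - (2 - α/2) * x ^ (1 - α/2) = 0 ↔ x = g := by
    rw [← hexp]; exact sub_mul_rpow_eq_zero_iff ha hp (by linarith)
  refine ⟨g, hg, (hcrit g hg).2 rfl, fun g' hg' => (hcrit g' hg').1, ?_, ?_, ?_⟩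
  · exact hq g ▸ mul_add_sub_rpow_critPoint_pos ha hc hp
  · simpa only [hq] using tendsto_mul_add_sub_rpow_atBot hp
  · simp only [hq]
    exact existsUnique_zero_of_strictAntiOn_Ici
      (continuous_mul_add_sub_rpow (by linarith)).continuousOn
      (strictAntiOn_mul_add_sub_rpow ha hp) (mul_add_sub_rpow_critPoint_pos ha hc hp)
      (tendsto_mul_add_sub_rpow_atBot hp)
end

section
/- Let $\alpha \in (0,1)$, let $\theta = \frac{1}{2-\alpha} + \frac{2^{1-\alpha}\alpha^2 + \alpha - 2\alpha^2}{2(2-\alpha)(1+\overline{\rho})}$ with $\overline{\rho} = 4.7476114$, and let $\rho^*(\alpha)$ be the unique root in $(1,\infty)$ of $\frac{1+\rho}{\alpha} + \rho - \rho^{2-\alpha/2} + 2^{-\alpha}\alpha + \frac{1}{2} - \alpha = 0$. Then for all $z, y$ with $1 \leq z, y < \rho^*(\alpha)$, we have $q(z,y,\alpha) := 2\theta(2-\alpha) + \frac{2\alpha z - \alpha z^{2-\alpha/2}}{1+z} - \frac{\alpha y^{2-\alpha/2}}{1+y} > 0$. -/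
open Set Real

/-!
The root `ρ*` of `q₂(·, α)` never drops below `ρ̄ = 4.7476114`: `q₂(ρ̄, α) ≥ 0` for every
`α ∈ (0, 1)` (a numerical fact, with minimum about `9·10⁻⁸` near `α ≈ 0.8226`, checked against a
quadratic Taylor model in `α`), while `q₂(16/α², α) < 0`, so by the intermediate value theorem and
uniqueness `ρ̄ ≤ ρ*`. On `[1, ρ*)` the `z`-part of `q` decreases and the `y`-part increases in
absolute value, so `q(z, y) > q(ρ*, ρ*)`. At the root, `q(ρ*, ρ*) = N/(1+ρ̄) - N/(1+ρ*)` with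
`N = 2^{1-α}α² + α - 2α² ≥ 0`, which is nonnegative because `ρ̄ ≤ ρ*`.
-/

lemma rpow_div_natCast_le_of_pow_le {x y : ℝ} {m n : ℕ} (hx : 0 ≤ x) (hy : 0 ≤ y) (hn : n ≠ 0)
    (h : x ^ m ≤ y ^ n) : x ^ ((m : ℝ) / n) ≤ y := by
  refine le_of_pow_le_pow_left₀ hn hy ?_
  rwa [← rpow_natCast (x ^ _), ← rpow_mul hx, div_mul_cancel₀ _ (by exact_mod_cast hn),
    rpow_natCast]

lemma exp_le_one_add_add_sq {x : ℝ} (hx : |x| ≤ 1) : exp x ≤ 1 + x + 13 / 18 * x ^ 2 := by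
  have h := (abs_le.mp (Real.exp_bound hx (n := 3) (by norm_num))).2
  have hcube : |x| ^ 3 ≤ x ^ 2 := by
    rw [pow_succ, ← sq_abs x]
    exact mul_le_of_le_one_right (sq_nonneg _) hx
  norm_num [Finset.sum_range_succ, Nat.factorial] at h
  nlinarith

lemma quadratic_le_one_div {a c : ℝ} (ha : 0 < a) (ha1 : a ≤ 1) (hc : 0 < c) :
    1 / c - (a - c) / c ^ 2 + (a - c) ^ 2 / c ^ 2 ≤ 1 / a := by
  have key : 1 / a - (1 / c - (a - c) / c ^ 2) = (a - c) ^ 2 / (a * c ^ 2) := by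
    field_simp; ring
  have : (a - c) ^ 2 / c ^ 2 ≤ (a - c) ^ 2 / (a * c ^ 2) :=
    div_le_div_of_nonneg_left (sq_nonneg _) (by positivity)
      (mul_le_of_le_one_left (by positivity) ha1)
  linarith

lemma rpow_add_mul_sub_le_rpow {p x y : ℝ} (hp : 1 ≤ p) (hx : 0 < x) (hy : 0 ≤ y) :
    x ^ p + p * x ^ (p - 1) * (y - x) ≤ y ^ p := by
  have h := one_add_mul_self_le_rpow_one_add (s := y / x - 1)
    (by linarith [div_nonneg hy hx.le]) hp
  rw [add_sub_cancel, div_rpow hy hx.le, le_div_iff₀ (rpow_pos_of_pos hx p)] at h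
  have hxp : x ^ p = x * x ^ (p - 1) := by
    rw [← rpow_one_add' hx.le (by linarith), add_sub_cancel]
  calc x ^ p + p * x ^ (p - 1) * (y - x) = (1 + p * (y / x - 1)) * x ^ p := by
        rw [hxp]; field_simp
    _ ≤ y ^ p := h

lemma strictMonoOn_rpow_div_one_add {p : ℝ} (hp : 1 ≤ p) :
    StrictMonoOn (fun x : ℝ => x ^ p / (1 + x)) (Ioi 0) := by
  intro x hx y hy hxy
  have hx : 0 < x := hx
  have hy : 0 < y := hy
  have hsplit : ∀ t : ℝ, 0 < t → t ^ p / (1 + t) = t ^ (p - 1) * (t / (1 + t)) := fun t ht => by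
    rw [← mul_div_assoc, ← rpow_add_one ht.ne', sub_add_cancel]
  simp only [hsplit x hx, hsplit y hy]
  have hfrac : x / (1 + x) < y / (1 + y) := by
    rw [div_lt_div_iff₀ (by positivity) (by positivity)]; linarith
  exact mul_lt_mul' (rpow_le_rpow hx.le hxy.le (by linarith)) hfrac (by positivity)
    (rpow_pos_of_pos hy _)

lemma antitoneOn_two_mul_sub_rpow_div_one_add {p : ℝ} (hp : 3 / 2 ≤ p) :
    AntitoneOn (fun x : ℝ => (2 * x - x ^ p) / (1 + x)) (Ici 1) := by
  intro z hz ρ hρ hzρ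
  have hz : 1 ≤ z := hz
  have hz0 : 0 < z := by linarith
  have htangent := rpow_add_mul_sub_le_rpow (p := p) (by linarith) hz0 (by linarith : (0 : ℝ) ≤ ρ)
  have hw : 1 ≤ z ^ (p - 1) := one_le_rpow hz (by linarith)
  have hzp : z ^ p = z * z ^ (p - 1) := by
    rw [← rpow_one_add' hz0.le (by linarith), add_sub_cancel]
  show (2 * ρ - ρ ^ p) / (1 + ρ) ≤ (2 * z - z ^ p) / (1 + z)
  rw [div_le_div_iff₀ (by linarith) (by linarith)]
  have hslope : 2 ≤ p * z ^ (p - 1) + (p - 1) * z ^ p := by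
    rw [hzp]; nlinarith [mul_le_mul hz hw zero_le_one hz0.le]
  rw [hzp] at htangent hslope ⊢
  nlinarith [mul_le_mul_of_nonneg_left hslope (sub_nonneg.2 hzρ),
    mul_le_mul_of_nonneg_left htangent (by linarith : (0 : ℝ) ≤ 1 + z)]

lemma le_of_continuousOn_of_root_unique {f : ℝ → ℝ} {a b ρ : ℝ} (hab : a ≤ b)
    (hf : ContinuousOn f (Icc a b)) (ha : 0 ≤ f a) (hb : f b ≤ 0)
    (huniq : ∀ x ∈ Icc a b, f x = 0 → x = ρ) : a ≤ ρ := by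
  obtain ⟨x, hx, hfx⟩ := intermediate_value_Icc' hab hf ⟨hb, ha⟩
  exact huniq x hx hfx ▸ hx.1

lemma log_4_7476114_bounds :
    1.5576350637 ≤ log 4.7476114 ∧ log 4.7476114 ≤ (1.5576773713 : ℝ) := by
  have hlo : (2 : ℝ) ^ 36818 ≤ 4.7476114 ^ 16384 := by
    rw [show (4.7476114 : ℝ) = 23738057 / 5000000 by norm_num, div_pow, le_div_iff₀ (by positivity)]
    exact_mod_cast (by decide +kernel : 2 ^ 36818 * 5000000 ^ 16384 ≤ 23738057 ^ 16384)
  have hhi : (4.7476114 : ℝ) ^ 16384 ≤ 2 ^ 36819 := by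
    rw [show (4.7476114 : ℝ) = 23738057 / 5000000 by norm_num, div_pow, div_le_iff₀ (by positivity)]
    exact_mod_cast (by decide +kernel : 23738057 ^ 16384 ≤ 2 ^ 36819 * 5000000 ^ 16384)
  have hlo' := Real.log_le_log (by positivity) hlo
  have hhi' := Real.log_le_log (by positivity) hhi
  simp only [Real.log_pow] at hlo' hhi'
  push_cast at hlo' hhi'
  constructor <;> nlinarith [Real.log_two_gt_d9, Real.log_two_lt_d9]

lemma rpow_4_7476114_le : (4.7476114 : ℝ) ^ (26029 / 16384 : ℝ) ≤ 11.876960851 := by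
  refine mod_cast rpow_div_natCast_le_of_pow_le (m := 26029) (n := 16384)
    (by norm_num) (by norm_num) (by norm_num) ?_
  rw [show (4.7476114 : ℝ) = 23738057 / 5000000 by norm_num,
    show (11.876960851 : ℝ) = 11876960851 / 1000000000 by norm_num, div_pow, div_pow,
    div_le_div_iff₀ (by positivity) (by positivity)]
  exact_mod_cast (by decide +kernel :
    23738057 ^ 26029 * 1000000000 ^ 16384 ≤ 11876960851 ^ 16384 * 5000000 ^ 26029)

lemma le_two_rpow_neg : (0.5654095528 : ℝ) ≤ 2 ^ (-(6739 / 8192) : ℝ) := by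
  have h : (2 : ℝ) ^ (6739 / 8192 : ℝ) ≤ 0.5654095528⁻¹ := by
    refine mod_cast rpow_div_natCast_le_of_pow_le (m := 6739) (n := 8192)
      (by norm_num) (by norm_num) (by norm_num) ?_
    rw [show (0.5654095528 : ℝ) = 706761941 / 1250000000 by norm_num, inv_div, div_pow,
      le_div_iff₀ (by positivity)]
    exact_mod_cast (by decide +kernel : 2 ^ 6739 * 706761941 ^ 8192 ≤ 1250000000 ^ 8192)
  rw [rpow_neg zero_le_two]
  exact le_inv_of_le_inv₀ (by positivity) h

lemma rpow_4_7476114_le_mul_exp (a : ℝ) :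
    (4.7476114 : ℝ) ^ (2 - a / 2) ≤ 11.876960851 * exp (log 4.7476114 * (6739 / 8192 - a) / 2) := by
  have hr : (0 : ℝ) < 4.7476114 := by norm_num
  rw [show 2 - a / 2 = 26029 / 16384 + (6739 / 8192 - a) / 2 by ring, rpow_add hr,
    rpow_def_of_pos hr ((6739 / 8192 - a) / 2), ← mul_div_assoc]
  exact mul_le_mul_of_nonneg_right rpow_4_7476114_le (exp_pos _).le

lemma le_two_rpow_neg_mul (a : ℝ) :
    0.5654095528 * (1 + log 2 * (6739 / 8192 - a)) ≤ (2 : ℝ) ^ (-a) := by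
  rw [show -a = -(6739 / 8192) + (6739 / 8192 - a) by ring, rpow_add two_pos,
    rpow_def_of_pos two_pos (6739 / 8192 - a)]
  calc 0.5654095528 * (1 + log 2 * (6739 / 8192 - a))
      ≤ 0.5654095528 * exp (log 2 * (6739 / 8192 - a)) := by
        gcongr; linarith [add_one_le_exp (log 2 * (6739 / 8192 - a))]
    _ ≤ _ := mul_le_mul_of_nonneg_right le_two_rpow_neg (exp_pos _).le

noncomputable def q₂ (ρ α : ℝ) : ℝ := (1 + ρ) / α + ρ - ρ ^ (2 - α / 2) + 2 ^ (-α) * α + 1 / 2 - α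

lemma continuous_q₂ {α : ℝ} (hα : α ≤ 4) : Continuous fun ρ => q₂ ρ α := by
  have := continuous_rpow_const (q := 2 - α / 2) (by linarith)
  unfold q₂
  fun_prop

lemma sub_rpow_div_one_add_eq_of_q₂_eq_zero {α ρ : ℝ} (hα : α ≠ 0) (hρ : 1 + ρ ≠ 0)
    (h : q₂ ρ α = 0) :
    α * ((2 * ρ - ρ ^ (2 - α / 2)) / (1 + ρ)) - α * (ρ ^ (2 - α / 2) / (1 + ρ))
      = -2 - (2 ^ (1 - α) * α ^ 2 + α - 2 * α ^ 2) / (1 + ρ) := by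
  unfold q₂ at h
  rw [show ρ ^ (2 - α / 2) = (1 + ρ) / α + ρ + 2 ^ (-α) * α + 1 / 2 - α by linarith,
    sub_eq_add_neg 1 α, rpow_add two_pos, rpow_one]
  field_simp
  ring

lemma q₂_sixteen_div_sq_neg {α : ℝ} (hα0 : 0 < α) (hα1 : α < 1) : q₂ (16 / α ^ 2) α < 0 := by
  have hM : (1 : ℝ) ≤ 16 / α ^ 2 := by
    rw [le_div_iff₀ (by positivity)]; nlinarith
  have hpow : 64 / α ^ 3 ≤ (16 / α ^ 2) ^ (2 - α / 2) := by
    calc 64 / α ^ 3 = (4 / α) ^ ((2 : ℕ) * (3 / 2 : ℝ)) := by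
          rw [show ((2 : ℕ) : ℝ) * (3 / 2) = (3 : ℕ) by norm_num, rpow_natCast]; ring
      _ = (16 / α ^ 2) ^ (3 / 2 : ℝ) := by
          rw [rpow_mul (by positivity), rpow_natCast]; ring_nf
      _ ≤ _ := rpow_le_rpow_of_exponent_le hM (by linarith)
  have htwo : (2 : ℝ) ^ (-α) * α ≤ 1 := by
    have : (2 : ℝ) ^ (-α) ≤ 1 := rpow_le_one_of_one_le_of_nonpos one_le_two (by linarith)
    nlinarith [rpow_pos_of_pos two_pos (-α)]
  have hcubic : (1 + 16 / α ^ 2) / α + 16 / α ^ 2 - 64 / α ^ 3 + 3 / 2 - α < 0 := by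
    rw [show (1 + 16 / α ^ 2) / α + 16 / α ^ 2 - 64 / α ^ 3 + 3 / 2 - α
        = (α ^ 2 + 16 * α - 48 + 3 / 2 * α ^ 3 - α ^ 4) / α ^ 3 by field_simp; ring]
    exact div_neg_of_neg_of_pos (by nlinarith) (by positivity)
  unfold q₂
  linarith

/-- Lower model of `q₂ 4.7476114 a`, expanded at `a = c := 6739/8192` with `L = log ρ̄`,
`l = log 2`: `11.876960851 ≥ ρ̄ ^ (2 - c/2)` and `0.5654095528 ≤ 2 ^ (-c)`. -/
noncomputable def q₂Model (a L l : ℝ) : ℝ :=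
  5.7476114 * (8192 / 6739 + (6739 / 8192 - a) / (6739 / 8192) ^ 2
      + (6739 / 8192 - a) ^ 2 / (6739 / 8192) ^ 2)
    + 4.7476114
    - 11.876960851 * (1 + L * (6739 / 8192 - a) / 2 + 13 / 72 * L ^ 2 * (6739 / 8192 - a) ^ 2)
    + 0.5654095528 * (1 + l * (6739 / 8192 - a)) * a + 1 / 2 - a

lemma q₂Model_le {a : ℝ} (ha0 : 0 < a) (ha1 : a ≤ 1) :
    q₂Model a (log 4.7476114) (log 2) ≤ q₂ 4.7476114 a := by
  obtain ⟨hL, hL'⟩ := log_4_7476114_bounds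
  have hx : |log 4.7476114 * (6739 / 8192 - a) / 2| ≤ 1 := by
    rw [abs_le]; constructor <;> nlinarith
  have hpow := (rpow_4_7476114_le_mul_exp a).trans
    (mul_le_mul_of_nonneg_left (exp_le_one_add_add_sq hx) (by norm_num))
  have hinv := quadratic_le_one_div ha0 ha1 (by norm_num : (0 : ℝ) < 6739 / 8192)
  have htwo := mul_le_mul_of_nonneg_right (le_two_rpow_neg_mul a) ha0.le
  unfold q₂Model q₂
  rw [show (1 + 4.7476114 : ℝ) / a = 5.7476114 * (1 / a) by ring]
  linear_combination 5.7476114 * hinv + hpow + htwo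

lemma q₂Model_nonneg {a L l : ℝ} (ha0 : 0 ≤ a) (ha1 : a ≤ 1)
    (hL : 1.5576350637 ≤ L) (hL' : L ≤ 1.5576773713)
    (hl : 0.6931471803 ≤ l) (hl' : l ≤ 0.6931471808) : 0 ≤ q₂Model a L l := by
  unfold q₂Model
  rcases le_total a (6739 / 8192) with h | h
  · have h1 : L * (6739 / 8192 - a) ≤ 1.5576773713 * (6739 / 8192 - a) := by nlinarith
    have h2 : L ^ 2 * (6739 / 8192 - a) ^ 2 ≤ 1.5576773713 ^ 2 * (6739 / 8192 - a) ^ 2 := by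
      gcongr
    have h3 : 0.6931471803 * (6739 / 8192 - a) * a ≤ l * (6739 / 8192 - a) * a := by
      have := mul_nonneg (sub_nonneg.2 h) ha0; nlinarith
    norm_num at h1 h2 h3 ⊢
    -- `0.8226406999` is the vertex of the quadratic in `a` left after substituting the bounds
    nlinarith [sq_nonneg (a - 0.8226406999)]
  · have h1 : L * (6739 / 8192 - a) ≤ 1.5576350637 * (6739 / 8192 - a) := by nlinarith
    have h2 : L ^ 2 * (6739 / 8192 - a) ^ 2 ≤ 1.5576773713 ^ 2 * (6739 / 8192 - a) ^ 2 := by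
      gcongr
    have h3 : 0.6931471808 * (6739 / 8192 - a) * a ≤ l * (6739 / 8192 - a) * a := by
      have := mul_nonneg (sub_nonneg.2 h) ha0; nlinarith
    norm_num at h1 h2 h3 ⊢
    nlinarith [sq_nonneg (a - 0.8226840449)]

lemma q₂_4_7476114_nonneg {α : ℝ} (hα0 : 0 < α) (hα1 : α ≤ 1) : 0 ≤ q₂ 4.7476114 α := by
  obtain ⟨hL, hL'⟩ := log_4_7476114_bounds
  exact (q₂Model_nonneg hα0.le hα1 hL hL' log_two_gt_d9.le log_two_lt_d9.le).trans
    (q₂Model_le hα0 hα1)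

lemma ge_4_7476114_of_unique_root {α ρ : ℝ} (hα0 : 0 < α) (hα1 : α < 1)
    (huniq : ∀ x : ℝ, 1 < x → q₂ x α = 0 → x = ρ) : 4.7476114 ≤ ρ := by
  have hM : (4.7476114 : ℝ) ≤ 16 / α ^ 2 := by
    rw [le_div_iff₀ (by positivity)]; nlinarith
  exact le_of_continuousOn_of_root_unique hM (continuous_q₂ (by linarith)).continuousOn
    (q₂_4_7476114_nonneg hα0 hα1.le) (q₂_sixteen_div_sq_neg hα0 hα1).le
    fun x hx => huniq x (by linarith [hx.1])

theorem stmt_3_general (α ρstar : ℝ) (hα : α ∈ Set.Ioo (0:ℝ) 1)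
    (hroot : (1+ρstar)/α + ρstar - ρstar ^ (2 - α/2) + 2^(-α) * α + 1/2 - α = 0)
    (huniq : ∀ ρ : ℝ, 1 < ρ →
      (1+ρ)/α + ρ - ρ ^ (2 - α/2) + 2^(-α) * α + 1/2 - α = 0 → ρ = ρstar)
    (ρbar θ : ℝ) (hρbar : ρbar = 4.7476114)
    (hθ : θ = 1/(2-α) + (2^(1-α) * α^2 + α - 2*α^2) / (2*(2-α)*(1+ρbar))) :
    ∀ z y : ℝ, 1 ≤ z → z < ρstar → 1 ≤ y → y < ρstar →
      0 < 2*θ*(2-α) + (2*α*z - α * z ^ (2 - α/2)) / (1+z) - α * y ^ (2 - α/2) / (1+y) := by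
  obtain ⟨hα0, hα1⟩ := hα
  intro z y hz hzρ hy hyρ
  have hρbar_le : ρbar ≤ ρstar := hρbar ▸ ge_4_7476114_of_unique_root hα0 hα1 huniq
  have hN : 0 ≤ (2:ℝ)^(1-α) * α^2 + α - 2*α^2 := by
    have : (1 : ℝ) ≤ 2 ^ (1 - α) := one_le_rpow one_le_two (by linarith)
    nlinarith
  have hθ' : 2*θ*(2-α) = 2 + (2^(1-α) * α^2 + α - 2*α^2)/(1+ρbar) := by
    rw [hθ]; field_simp [show 2 - α ≠ 0 by linarith, show 1 + ρbar ≠ 0 by linarith]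
  have hattained := sub_rpow_div_one_add_eq_of_q₂_eq_zero hα0.ne' (by linarith) hroot
  have hzB := mul_le_mul_of_nonneg_left (antitoneOn_two_mul_sub_rpow_div_one_add
    (p := 2 - α/2) (by linarith) (mem_Ici.2 hz) (mem_Ici.2 (by linarith)) hzρ.le) hα0.le
  have hyC := mul_lt_mul_of_pos_left (strictMonoOn_rpow_div_one_add (p := 2 - α/2) (by linarith)
    (mem_Ioi.2 (by linarith)) (mem_Ioi.2 (by linarith)) hyρ) hα0
  have hNρ := div_le_div_of_nonneg_left hN (by linarith) (by linarith : 1 + ρbar ≤ 1 + ρstar)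
  beta_reduce at hzB hyC
  rw [show (2*α*z - α * z ^ (2 - α/2)) / (1+z) = α * ((2*z - z ^ (2 - α/2)) / (1+z)) by ring,
    mul_div_assoc]
  linarith

theorem stmt_3 (α ρstar : ℝ) (hα : α ∈ Set.Ioo (0:ℝ) 1)
    (hρ : 1 < ρstar)
    (hroot : (1+ρstar)/α + ρstar - ρstar ^ (2 - α/2) + 2^(-α) * α + 1/2 - α = 0)
    (huniq : ∀ ρ : ℝ, 1 < ρ →
      (1+ρ)/α + ρ - ρ ^ (2 - α/2) + 2^(-α) * α + 1/2 - α = 0 → ρ = ρstar)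
    (ρbar θ : ℝ) (hρbar : ρbar = 4.7476114)
    (hθ : θ = 1/(2-α) + (2^(1-α) * α^2 + α - 2*α^2) / (2*(2-α)*(1+ρbar))) :
    ∀ z y : ℝ, 1 ≤ z → z < ρstar → 1 ≤ y → y < ρstar →
      0 < 2*θ*(2-α) + (2*α*z - α * z ^ (2 - α/2)) / (1+z) - α * y ^ (2 - α/2) / (1+y) :=
  stmt_3_general α ρstar hα hroot huniq ρbar θ hρbar hθ
end

section
/- For a linear interpolation of $w \in C^2[t_0, t_1]$ at the endpoints, the weighted truncation error of the L1 approximation of the Caputo derivative of order $\alpha \in (0,1)$ at $t_1$ satisfies $\left| \frac{1}{\Gamma(1-\alpha)} \int_{t_0}^{t_1} (t_1-s)^{-\alpha}[w'(s) - L'_{1,1}(s)]\,ds \right| \leq \frac{\alpha}{2\Gamma(3-\alpha)} \max_{t_0 \leq t \leq t_1}|w''(t)| \, \tau_1^{2-\alpha}$, where $\tau_1 = t_1 - t_0$ and $L_{1,1}$ is the linear interpolant of $w$ at $t_0, t_1$. -/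
/-!
Write `e = w - L₁,₁` for the interpolation error, so that `e' = w' - L₁,₁'` and `e'' = w''`.
Since `e` vanishes at both nodes and `|e''| ≤ K`, the functions `±e - K/2 (s - t₀)(t₁ - s)` are
convex and vanish at the nodes, whence `|e(s)| ≤ K/2 (s - t₀)(t₁ - s)`. Integrating by parts
moves the derivative onto the kernel: `∫ (t₁ - s)^(-α) e' = -α ∫ (t₁ - s)^(-α-1) e`, the
boundary term at `t₁` vanishing because `e = O(t₁ - s)` there. The remaining integral is bounded
by the Beta integral `∫ (s - t₀)(t₁ - s)^(-α) = τ₁^(2-α) / ((1-α)(2-α)) = Γ(1-α)/Γ(3-α) τ₁^(2-α)`.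
-/

open Set Real MeasureTheory

theorem le_half_mul_sub_mul_sub_of_neg_le_deriv2 {f f' f'' : ℝ → ℝ} {a b K x : ℝ}
    (hf : ContinuousOn f (Icc a b)) (hf' : ∀ y ∈ Ioo a b, HasDerivAt f (f' y) y)
    (hf'' : ∀ y ∈ Ioo a b, HasDerivAt f' (f'' y) y) (hK : ∀ y ∈ Ioo a b, -K ≤ f'' y)
    (ha : f a = 0) (hb : f b = 0) (hx : x ∈ Icc a b) :
    f x ≤ K / 2 * (x - a) * (b - x) := by
  set g : ℝ → ℝ := fun y => f y - K / 2 * (y - a) * (b - y)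
  have hconv : ConvexOn ℝ (Icc a b) g := by
    refine convexOn_of_hasDerivWithinAt2_nonneg (convex_Icc a b)
      (f' := fun y => f' y - K / 2 * (a + b - 2 * y)) (f'' := fun y => f'' y + K)
      (hf.sub (by fun_prop)) ?_ ?_ ?_ <;> rw [interior_Icc] <;> intro y hy
    · have hp := (((hasDerivAt_id y).sub_const a).const_mul (K / 2)).mul
        ((hasDerivAt_id y).const_sub b)
      exact ((hf' y hy).sub hp).hasDerivWithinAt.congr_deriv (by simp only [id]; ring)
    · have hp := (((hasDerivAt_id y).const_mul 2).const_sub (a + b)).const_mul (K / 2)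
      exact ((hf'' y hy).sub hp).hasDerivWithinAt.congr_deriv (by ring)
    · linarith [hK y hy]
  have hseg : x ∈ segment ℝ a b := by rwa [segment_eq_Icc (hx.1.trans hx.2)]
  have := hconv.le_on_segment (left_mem_Icc.2 (hx.1.trans hx.2))
    (right_mem_Icc.2 (hx.1.trans hx.2)) hseg
  simp only [g, ha, hb, sub_self, mul_zero, zero_mul, max_self] at this
  linarith

theorem abs_le_half_mul_sub_mul_sub_of_abs_deriv2_le {f f' f'' : ℝ → ℝ} {a b K x : ℝ}
    (hf : ContinuousOn f (Icc a b)) (hf' : ∀ y ∈ Ioo a b, HasDerivAt f (f' y) y)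
    (hf'' : ∀ y ∈ Ioo a b, HasDerivAt f' (f'' y) y) (hK : ∀ y ∈ Ioo a b, |f'' y| ≤ K)
    (ha : f a = 0) (hb : f b = 0) (hx : x ∈ Icc a b) :
    |f x| ≤ K / 2 * (x - a) * (b - x) := by
  refine abs_le.2 ⟨?_, le_half_mul_sub_mul_sub_of_neg_le_deriv2 hf hf' hf''
    (fun y hy => (abs_le.1 (hK y hy)).1) ha hb hx⟩
  have := le_half_mul_sub_mul_sub_of_neg_le_deriv2 (f := -f) hf.neg (fun y hy => (hf' y hy).neg)
    (fun y hy => (hf'' y hy).neg) (fun y hy => neg_le_neg (abs_le.1 (hK y hy)).2)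
    (by simp [ha]) (by simp [hb]) hx
  simp only [Pi.neg_apply] at this
  linarith

theorem exists_abs_le_of_abs_deriv_le {f f' : ℝ → ℝ} {a b K : ℝ}
    (hf : ∀ x ∈ Ioo a b, HasDerivAt f (f' x) x) (hK : ∀ x ∈ Ioo a b, |f' x| ≤ K) :
    ∃ M, ∀ x ∈ Ioo a b, |f x| ≤ M := by
  rcases (Ioo a b).eq_empty_or_nonempty with h | ⟨m, hm⟩
  · exact ⟨0, by simp [h]⟩
  refine ⟨|f m| + K * (b - a), fun x hx => ?_⟩
  have hlip := (convex_Ioo a b).norm_image_sub_le_of_norm_hasDerivWithin_le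
    (fun y hy => (hf y hy).hasDerivWithinAt) hK hm hx
  have hK0 : 0 ≤ K := (abs_nonneg _).trans (hK m hm)
  have hxm : |x - m| ≤ b - a := abs_sub_le_iff.2 ⟨by linarith [hx.2, hm.1], by linarith [hx.1, hm.2]⟩
  simp only [Real.norm_eq_abs] at hlip
  calc |f x| ≤ |f m| + |f x - f m| := by
        simpa using abs_add_le (f m) (f x - f m)
    _ ≤ |f m| + K * (b - a) := by gcongr; exact hlip.trans (by gcongr)

theorem intervalIntegrable_sub_rpow {a b r : ℝ} (hr : -1 < r) :
    IntervalIntegrable (fun s => (b - s) ^ r) volume a b := by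
  simpa using (intervalIntegral.intervalIntegrable_rpow' (a := b - a) (b := 0) hr).comp_sub_left b

theorem integral_sub_rpow {a b r : ℝ} (hr : -1 < r) :
    ∫ s in a..b, (b - s) ^ r = (b - a) ^ (r + 1) / (r + 1) := by
  rw [intervalIntegral.integral_comp_sub_left (fun x => x ^ r), sub_self, integral_rpow (Or.inl hr),
    zero_rpow (by linarith), sub_zero]

theorem integral_sub_mul_sub_rpow {a b r : ℝ} (hab : a ≤ b) (hr : -1 < r) :
    ∫ s in a..b, (s - a) * (b - s) ^ r = (b - a) ^ (r + 2) / ((r + 1) * (r + 2)) := by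
  have hsplit : EqOn (fun s => (s - a) * (b - s) ^ r)
      (fun s => (b - a) * (b - s) ^ r - (b - s) ^ (r + 1)) (uIcc a b) := by
    intro s hs
    rw [uIcc_of_le hab] at hs
    simp only [rpow_add_one' (sub_nonneg.2 hs.2) (by linarith : r + 1 ≠ 0)]
    ring
  rw [intervalIntegral.integral_congr hsplit, intervalIntegral.integral_sub
    ((intervalIntegrable_sub_rpow hr).const_mul _) (intervalIntegrable_sub_rpow (by linarith)),
    intervalIntegral.integral_const_mul, integral_sub_rpow hr, integral_sub_rpow (by linarith),
    show r + 2 = r + 1 + 1 by ring, rpow_add_one' (sub_nonneg.2 hab) (y := r + 1) (by linarith),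
    rpow_add_one' (sub_nonneg.2 hab) (by linarith)]
  have : r + 1 ≠ 0 := by linarith
  have : r + 1 + 1 ≠ 0 := by linarith
  field_simp
  ring

theorem intervalIntegrable_of_abs_le_mul_sub_rpow {f : ℝ → ℝ} {a b C r : ℝ} (hab : a ≤ b)
    (hr : -1 < r) (hf : ContinuousOn f (Ioo a b)) (hC : ∀ s ∈ Ioo a b, |f s| ≤ C * (b - s) ^ r) :
    IntervalIntegrable f volume a b := by
  have hg := (intervalIntegrable_sub_rpow (a := a) (b := b) hr).const_mul C
  rw [intervalIntegrable_iff_integrableOn_Ioo_of_le hab] at hg ⊢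
  refine hg.mono' (hf.aestronglyMeasurable measurableSet_Ioo) ?_
  exact (ae_restrict_iff' measurableSet_Ioo).2 (.of_forall hC)

theorem abs_sub_rpow_mul_le {b s C p y : ℝ} (hs : s < b) (hy : |y| ≤ C * (b - s)) :
    |(b - s) ^ p * y| ≤ C * (b - s) ^ (p + 1) := by
  have hbs : 0 < b - s := sub_pos.2 hs
  rw [abs_mul, abs_of_nonneg (rpow_nonneg hbs.le _), rpow_add_one hbs.ne']
  calc (b - s) ^ p * |y| ≤ (b - s) ^ p * (C * (b - s)) := by gcongr
    _ = C * ((b - s) ^ p * (b - s)) := by ring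

theorem continuousOn_sub_rpow_mul {e : ℝ → ℝ} {a b α C : ℝ} (hα : α < 1)
    (he : ContinuousOn e (Icc a b)) (hC : ∀ s ∈ Icc a b, |e s| ≤ C * (b - s)) :
    ContinuousOn (fun s => (b - s) ^ (-α) * e s) (Icc a b) := by
  intro x hx
  rcases hx.2.lt_or_eq with hxb | rfl
  · exact ((continuousAt_const.sub continuousAt_id).rpow_const
      (Or.inl (sub_ne_zero.2 hxb.ne'))).continuousWithinAt.mul (he x hx)
  have heb : e x = 0 := abs_nonpos_iff.1 (by simpa using hC x hx)
  have hbound : ∀ s ∈ Icc a x, ‖(x - s) ^ (-α) * e s‖ ≤ C * (x - s) ^ (1 - α) := by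
    intro s hs
    rcases hs.2.lt_or_eq with hsx | rfl
    · simpa [neg_add_eq_sub] using abs_sub_rpow_mul_le (p := -α) hsx (hC s hs)
    · simp [heb, zero_rpow (sub_ne_zero.2 hα.ne')]
  have hlim : ContinuousAt (fun s => C * (x - s) ^ (1 - α)) x :=
    continuousAt_const.mul ((continuousAt_const.sub continuousAt_id).rpow_const
      (Or.inr (sub_nonneg.2 hα.le)))
  simp only [ContinuousWithinAt, sub_self, heb, mul_zero]
  refine squeeze_zero_norm' (eventually_nhdsWithin_of_forall hbound) ?_
  simpa [zero_rpow (sub_ne_zero.2 hα.ne')] using hlim.tendsto.mono_left nhdsWithin_le_nhds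

theorem integral_sub_rpow_mul_deriv {e e' : ℝ → ℝ} {a b α C M : ℝ} (hab : a ≤ b) (hα : α < 1)
    (he : ContinuousOn e (Icc a b)) (he' : ∀ x ∈ Ioo a b, HasDerivAt e (e' x) x)
    (he'c : ContinuousOn e' (Ioo a b)) (hM : ∀ x ∈ Ioo a b, |e' x| ≤ M)
    (hC : ∀ s ∈ Icc a b, |e s| ≤ C * (b - s)) :
    ∫ s in a..b, (b - s) ^ (-α) * e' s =
      -((b - a) ^ (-α) * e a) - α * ∫ s in a..b, (b - s) ^ (-α - 1) * e s := by
  have heb : e b = 0 := abs_nonpos_iff.1 (by simpa using hC b (right_mem_Icc.2 hab))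
  have hpow (p : ℝ) : ContinuousOn (fun s => (b - s) ^ p) (Ioo a b) := fun x hx =>
    ((continuousAt_const.sub continuousAt_id).rpow_const (p := p)
      (Or.inl (sub_ne_zero.2 hx.2.ne'))).continuousWithinAt
  have hint₁ : IntervalIntegrable (fun s => (b - s) ^ (-α - 1) * e s) volume a b :=
    intervalIntegrable_of_abs_le_mul_sub_rpow (C := C) (r := -α) hab (by linarith)
      ((hpow _).mul (he.mono Ioo_subset_Icc_self)) fun s hs => by
        simpa using abs_sub_rpow_mul_le (p := -α - 1) hs.2 (hC s (Ioo_subset_Icc_self hs))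
  have hint₂ : IntervalIntegrable (fun s => (b - s) ^ (-α) * e' s) volume a b :=
    intervalIntegrable_of_abs_le_mul_sub_rpow (C := M) (r := -α) hab (by linarith)
      ((hpow _).mul he'c)
      fun s hs => by
        have hbs : 0 ≤ (b - s) ^ (-α) := rpow_nonneg (sub_pos.2 hs.2).le _
        rw [abs_mul, abs_of_nonneg hbs, mul_comm]
        exact mul_le_mul_of_nonneg_right (hM s hs) hbs
  have hderiv : ∀ x ∈ Ioo a b, HasDerivAt (fun s => (b - s) ^ (-α) * e s)
      (α * ((b - x) ^ (-α - 1) * e x) + (b - x) ^ (-α) * e' x) x := fun x hx =>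
    ((((hasDerivAt_id x).const_sub b).rpow_const (Or.inl (sub_ne_zero.2 hx.2.ne'))).mul
      (he' x hx)).congr_deriv (by simp only [id]; ring)
  have hFTC := intervalIntegral.integral_eq_sub_of_hasDerivAt_of_le hab
    (continuousOn_sub_rpow_mul hα he hC) hderiv ((hint₁.const_mul α).add hint₂)
  rw [intervalIntegral.integral_add (hint₁.const_mul α) hint₂,
    intervalIntegral.integral_const_mul] at hFTC
  simp only [sub_self, heb, mul_zero] at hFTC
  linarith

theorem abs_integral_sub_rpow_mul_deriv_le {e e' e'' : ℝ → ℝ} {a b α K : ℝ} (hab : a ≤ b)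
    (hα₀ : 0 ≤ α) (hα₁ : α < 1) (he : ContinuousOn e (Icc a b))
    (he' : ∀ x ∈ Ioo a b, HasDerivAt e (e' x) x) (he'' : ∀ x ∈ Ioo a b, HasDerivAt e' (e'' x) x)
    (hK : ∀ x ∈ Ioo a b, |e'' x| ≤ K) (ha : e a = 0) (hb : e b = 0) :
    |∫ s in a..b, (b - s) ^ (-α) * e' s| ≤
      α * (K / 2) * ((b - a) ^ (2 - α) / ((1 - α) * (2 - α))) := by
  obtain ⟨M, hM⟩ := exists_abs_le_of_abs_deriv_le he'' hK
  have herr (s : ℝ) (hs : s ∈ Icc a b) : |e s| ≤ K / 2 * (s - a) * (b - s) :=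
    abs_le_half_mul_sub_mul_sub_of_abs_deriv2_le he he' he'' hK ha hb hs
  have hC (s : ℝ) (hs : s ∈ Icc a b) : |e s| ≤ |K| / 2 * (b - a) * (b - s) := by
    refine (herr s hs).trans ?_
    obtain ⟨has, hsb⟩ := hs
    gcongr
    exact le_abs_self K
  rw [integral_sub_rpow_mul_deriv hab hα₁ he he'
      (fun x hx => (he'' x hx).continuousAt.continuousWithinAt) hM hC,
    ha, mul_zero, neg_zero, zero_sub, abs_neg, abs_mul, abs_of_nonneg hα₀, mul_assoc]
  gcongr
  have hdom : IntervalIntegrable (fun s => K / 2 * ((s - a) * (b - s) ^ (-α))) volume a b :=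
    ((intervalIntegrable_sub_rpow (by linarith)).continuousOn_mul
      (g := fun s => s - a) (by fun_prop)).const_mul _
  calc |∫ s in a..b, (b - s) ^ (-α - 1) * e s|
      ≤ ∫ s in a..b, K / 2 * ((s - a) * (b - s) ^ (-α)) := by
        refine intervalIntegral.norm_integral_le_of_norm_le (f := fun s => (b - s) ^ (-α - 1) * e s)
          hab ?_ hdom
        filter_upwards [Measure.ae_ne volume b] with s hsb hs
        rw [Real.norm_eq_abs]
        have hs' : s ∈ Icc a b := ⟨hs.1.le, hs.2⟩
        refine (abs_sub_rpow_mul_le (lt_of_le_of_ne hs.2 hsb) (herr s hs')).trans_eq ?_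
        rw [sub_add_cancel]
        ring
    _ = K / 2 * ((b - a) ^ (2 - α) / ((1 - α) * (2 - α))) := by
        rw [intervalIntegral.integral_const_mul, integral_sub_mul_sub_rpow hab (by linarith)]
        ring_nf

theorem stmt_4 (α t0 t1 : ℝ) (hα : α ∈ Set.Ioo (0:ℝ) 1) (h01 : t0 < t1)
    (w : ℝ → ℝ) (hw : ContDiffOn ℝ 2 w (Set.Icc t0 t1))
    (K : ℝ) (hK : ∀ t ∈ Set.Icc t0 t1, |deriv (deriv w) t| ≤ K) :
    |(1 / Real.Gamma (1 - α)) *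
        ∫ s in t0..t1, (t1 - s) ^ (-α) * (deriv w s - (w t1 - w t0) / (t1 - t0))| ≤
      α / (2 * Real.Gamma (3 - α)) * K * (t1 - t0) ^ (2 - α) := by
  obtain ⟨hα₀, hα₁⟩ := hα
  obtain ⟨hw₁, -, hw₂⟩ := (contDiffOn_succ_iff_deriv_of_isOpen (n := 1) isOpen_Ioo).1
    (hw.mono Ioo_subset_Icc_self)
  have hw' (x : ℝ) (hx : x ∈ Ioo t0 t1) : HasDerivAt w (deriv w x) x :=
    (hw₁.differentiableAt (isOpen_Ioo.mem_nhds hx)).hasDerivAt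
  have hw'' (x : ℝ) (hx : x ∈ Ioo t0 t1) : HasDerivAt (deriv w) (deriv (deriv w) x) x :=
    ((hw₂.differentiableOn one_ne_zero).differentiableAt (isOpen_Ioo.mem_nhds hx)).hasDerivAt
  set c := (w t1 - w t0) / (t1 - t0)
  have hwc := hw.continuousOn
  have hbound := abs_integral_sub_rpow_mul_deriv_le (e := fun s => w s - w t0 - c * (s - t0))
    h01.le hα₀.le hα₁ (by fun_prop)
    (fun x hx => (((hw' x hx).sub_const _).sub
      (((hasDerivAt_id x).sub_const t0).const_mul c)).congr_deriv (by simp))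
    (fun x hx => (hw'' x hx).sub_const c) (fun x hx => hK x (Ioo_subset_Icc_self hx))
    (by simp) (by simp [c, div_mul_cancel₀ _ (sub_ne_zero.2 h01.ne')])
  have hΓ₁ : 0 < Gamma (1 - α) := Gamma_pos_of_pos (by linarith)
  have hΓ₃ : Gamma (3 - α) = (2 - α) * ((1 - α) * Gamma (1 - α)) := by
    rw [show 3 - α = (2 - α) + 1 by ring, Gamma_add_one (by linarith),
      show 2 - α = (1 - α) + 1 by ring, Gamma_add_one (by linarith)]
  rw [abs_mul, abs_of_pos (one_div_pos.2 hΓ₁)]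
  calc 1 / Gamma (1 - α) * |∫ s in t0..t1, (t1 - s) ^ (-α) * (deriv w s - c)|
      ≤ 1 / Gamma (1 - α) * (α * (K / 2) * ((t1 - t0) ^ (2 - α) / ((1 - α) * (2 - α)))) := by
        gcongr
    _ = α / (2 * Gamma (3 - α)) * K * (t1 - t0) ^ (2 - α) := by
        rw [hΓ₃]
        field_simp
end

section
/- Let $\alpha \in (0,1)$, let $\tau_{n-1}, \tau_n > 0$ with $\rho_n = \tau_n/\tau_{n-1}$, let $\rho_{n+1} > 0$, and let $\theta > 0$. Define $c_0^{(n)} = \frac{1}{\tau_n^\alpha \Gamma(2-\alpha)}$ and $d_0^{(n)} = \frac{\alpha}{\tau_n^\alpha \Gamma(3-\alpha)}$. Then for any real numbers $u, v$ (representing $\nabla_\tau w^n$ and $\nabla_\tau w^{n-1}$), $\left[\left(\theta c_0^{(n)} + \frac{\rho_n}{1+\rho_n} d_0^{(n)}\right) u - \frac{\rho_n^2}{1+\rho_n} d_0^{(n)} v\right] u \geq \frac{\alpha \rho_{n+1}^{2-\alpha/2} u^2}{2(1+\rho_{n+1})\tau_n^\alpha \Gamma(3-\alpha)} - \frac{\alpha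 \rho_n^{2-\alpha/2} v^2}{2(1+\rho_n)\tau_{n-1}^\alpha \Gamma(3-\alpha)} + \frac{q(\rho_n,\rho_{n+1},\alpha) u^2}{2\tau_n^\alpha \Gamma(3-\alpha)}$, where $q(z,y,\alpha) = 2\theta(2-\alpha) + \frac{2\alpha z - \alpha z^{2-\alpha/2}}{1+z} - \frac{\alpha y^{2-\alpha/2}}{1+y}$. -/
lemma core_id (α ρn B g s P Q R u v θ e : ℝ)
    (hB : B ≠ 0) (hg : g ≠ 0) (hs : s ≠ 0) (h1ρ : 1 + ρn ≠ 0) (he : e ≠ 0)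
    (h2α : (2:ℝ) - α ≠ 0) (hQ : Q = P * s) :
    ((θ * (1/((s*B)*g)) + ρn/(1+ρn) * (α/((s*B)*((2-α)*g)))) * u
        - ρn^2/(1+ρn) * (α/((s*B)*((2-α)*g))) * v) * u
      - (α*R*u^2/(2*e*(s*B)*((2-α)*g)) - α*P*v^2/(2*(1+ρn)*B*((2-α)*g))
          + (2*θ*(2-α) + (2*α*ρn - α*P)/(1+ρn) - α*R/e) * u^2/(2*(s*B)*((2-α)*g)))
      = α/(2*(1+ρn)*(s*B)*((2-α)*g)) * (P*u^2 + Q*v^2 - 2*ρn^2*(u*v)) := by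
  subst hQ
  field_simp
  ring

theorem stmt_8 (α τn1 τn ρn ρn1 θ : ℝ) (hα : α ∈ Set.Ioo (0:ℝ) 1)
    (hτn1 : 0 < τn1) (hτn : 0 < τn) (hρn : ρn = τn / τn1) (hρn1 : 0 < ρn1)
    (hθ : 0 < θ)
    (c0 d0 : ℝ)
    (hc0 : c0 = 1 / (τn ^ α * Real.Gamma (2 - α)))
    (hd0 : d0 = α / (τn ^ α * Real.Gamma (3 - α))) :
    ∀ u v : ℝ,
      ((θ * c0 + ρn / (1 + ρn) * d0) * u - ρn^2 / (1 + ρn) * d0 * v) * u ≥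
        α * ρn1 ^ (2 - α/2) * u^2 / (2 * (1 + ρn1) * τn ^ α * Real.Gamma (3 - α)) -
        α * ρn ^ (2 - α/2) * v^2 / (2 * (1 + ρn) * τn1 ^ α * Real.Gamma (3 - α)) +
        (2*θ*(2-α) + (2*α*ρn - α * ρn ^ (2 - α/2)) / (1+ρn) - α * ρn1 ^ (2 - α/2) / (1+ρn1)) *
          u^2 / (2 * τn ^ α * Real.Gamma (3 - α)) := by
  obtain ⟨hα0, hα1⟩ := hα
  intro u v
  have hρpos : 0 < ρn := by rw [hρn]; positivity
  have hsa : (0:ℝ) < ρn ^ α := Real.rpow_pos_of_pos hρpos α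
  have hτa : (0:ℝ) < τn ^ α := Real.rpow_pos_of_pos hτn α
  have hτ1a : (0:ℝ) < τn1 ^ α := Real.rpow_pos_of_pos hτn1 α
  have hG2 : 0 < Real.Gamma (2 - α) := Real.Gamma_pos_of_pos (by linarith)
  have hG3eq : Real.Gamma (3 - α) = (2 - α) * Real.Gamma (2 - α) := by
    have h : (3:ℝ) - α = (2 - α) + 1 := by ring
    rw [h, Real.Gamma_add_one (by linarith : (0:ℝ) < 2 - α).ne']
  have hS : ρn ^ α * τn1 ^ α = τn ^ α := by
    rw [hρn, ← Real.mul_rpow (by positivity) hτn1.le, div_mul_cancel₀ _ hτn1.ne']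
  have hQP : ρn ^ (2 + α/2) = ρn ^ (2 - α/2) * ρn ^ α := by
    rw [← Real.rpow_add hρpos]; congr 1; ring
  have ha2 : (ρn ^ (1 - α/4))^2 = ρn ^ (2 - α/2) := by
    rw [← Real.rpow_natCast (ρn ^ (1-α/4)) 2, ← Real.rpow_mul hρpos.le]
    congr 1; push_cast; ring
  have hb2 : (ρn ^ (1 + α/4))^2 = ρn ^ (2 + α/2) := by
    rw [← Real.rpow_natCast (ρn ^ (1+α/4)) 2, ← Real.rpow_mul hρpos.le]
    congr 1; push_cast; ring
  have hab : ρn ^ (1 - α/4) * ρn ^ (1 + α/4) = ρn ^ 2 := by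
    rw [← Real.rpow_add hρpos, ← Real.rpow_natCast ρn 2]
    congr 1; push_cast; ring
  have hsq : (ρn ^ (1 - α/4) * u - ρn ^ (1 + α/4) * v)^2
      = ρn ^ (2 - α/2) * u^2 + ρn ^ (2 + α/2) * v^2 - 2 * ρn^2 * (u*v) := by
    rw [← ha2, ← hb2, ← hab]; ring
  have key : 0 ≤ ρn ^ (2 - α/2) * u^2 + ρn ^ (2 + α/2) * v^2 - 2 * ρn^2 * (u*v) :=
    hsq ▸ sq_nonneg _
  have h1ρ : (0:ℝ) < 1 + ρn := by linarith
  have h1ρ1 : (0:ℝ) < 1 + ρn1 := by linarith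
  rw [ge_iff_le, ← sub_nonneg, hc0, hd0, hG3eq, ← hS]
  have hid := core_id α ρn (τn1 ^ α) (Real.Gamma (2 - α)) (ρn ^ α)
    (ρn ^ (2 - α/2)) (ρn ^ (2 + α/2)) (ρn1 ^ (2 - α/2)) u v θ (1 + ρn1)
    hτ1a.ne' hG2.ne' hsa.ne' h1ρ.ne' h1ρ1.ne' (by linarith) hQP
  rw [hid]
  have h2 : (0:ℝ) < 2 - α := by linarith
  exact mul_nonneg (div_nonneg hα0.le (mul_pos (mul_pos (mul_pos two_pos h1ρ)
    (mul_pos hsa hτ1a)) (mul_pos h2 hG2)).le) key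
end

section
/- Let $M \geq 2$, $h > 0$, and consider mesh functions $u = (u_0,\ldots,u_M)$ with $u_0 = u_M = 0$. Define the averaging operator $(\mathscr{A}u)_i = \frac{1}{12}(u_{i-1} + 10 u_i + u_{i+1})$ for $1 \leq i \leq M-1$, the inner products $(u,v) = h\sum_{i=1}^{M-1} u_i v_i$ and $(\delta_x u, \delta_x v) = \frac{1}{h}\sum_{i=1}^{M}(u_i - u_{i-1})(v_i - v_{i-1})$, with induced norms $\|u\|$ and $\|\delta_x u\|$, and $\|\delta_x u\|_{\mathcal{A}}^2 = (\mathscr{A}u, -\delta_x^2 u)$ where $(\delta_x^2 u)_i = (u_{i-1} - 2u_i + u_{i+1})/h^2$. Then $\frac{2}{3}\|\delta_x u\|^2 \leq \|\delta_x u\|_{\mathcal{A}}^2 \leq \|\delta_x u\|^2$ and $\frac{1}{3}\|u\|^2 \leq \|\mathscr{A}u\|^2 \leq \|u\|^2$. -/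
/-!
Since $(u_{i-1} + 10u_i + u_{i+1})/12 = u_i + \tfrac1{12}(u_{i-1} - 2u_i + u_{i+1})$, summation by parts
expresses both quadratic forms through $S_0 = \sum u_i^2$, $S_1 = \sum (u_i - u_{i-1})^2$ and
$S_2 = \sum (u_{i-1} - 2u_i + u_{i+1})^2$:
$\|\delta_x u\|_{\mathcal A}^2 = (S_1 - S_2/12)/h$ and $\|\mathscr A u\|^2 = h(S_0 - S_1/6 + S_2/144)$.
The four bounds then follow from $0 \le S_2 \le 4 S_1$ and $S_1 \le 4 S_0$, both instances of
$(a - b)^2 \le 2a^2 + 2b^2$.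
-/

open Finset

theorem sum_Icc_one_eq_sum_range {α : Type*} [AddCommMonoid α] (g : ℕ → α) (N : ℕ) :
    ∑ i ∈ Icc 1 N, g i = ∑ k ∈ range N, g (k + 1) := by
  rw [← Ico_add_one_right_eq_Icc, sum_Ico_eq_sum_range, Nat.add_sub_cancel]
  simp only [add_comm 1]

theorem sum_mul_secondDiff_add_sum_sq_diff {R : Type*} [CommRing R] (u : ℕ → R) (N : ℕ) :
    ∑ i ∈ Icc 1 N, u i * (u (i-1) - 2 * u i + u (i+1)) + ∑ i ∈ Icc 1 (N+1), (u i - u (i-1))^2 =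
      u (N+1) * (u (N+1) - u N) - u 0 * (u 1 - u 0) := by
  simp only [sum_Icc_one_eq_sum_range, Nat.add_sub_cancel]
  induction N with
  | zero => simp only [range_zero, sum_empty, zero_add, sum_range_one]; ring
  | succ n ih =>
    rw [sum_range_succ, sum_range_succ _ (n + 1)]
    linear_combination ih

theorem sum_mul_secondDiff_eq_neg_sum_sq_diff {R : Type*} [CommRing R] {u : ℕ → R} {N : ℕ}
    (h0 : u 0 = 0) (hN : u (N+1) = 0) :
    ∑ i ∈ Icc 1 N, u i * (u (i-1) - 2 * u i + u (i+1)) = -∑ i ∈ Icc 1 (N+1), (u i - u (i-1))^2 := by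
  have := sum_mul_secondDiff_add_sum_sq_diff u N
  rw [h0, hN] at this
  linear_combination this

theorem sum_add_succ_le_two_mul_sum (f : ℕ → ℝ) (hf : ∀ i, 0 ≤ f i) (N : ℕ) :
    ∑ i ∈ Icc 1 N, (f i + f (i+1)) ≤ 2 * ∑ i ∈ Icc 1 (N+1), f i := by
  simp only [sum_Icc_one_eq_sum_range, sum_add_distrib]
  have h1 := sum_range_succ (fun k => f (k + 1)) N
  have h2 := sum_range_succ' (fun k => f (k + 1)) N
  linarith [hf (N + 1), hf 1]

theorem sum_sq_secondDiff_le (u : ℕ → ℝ) (N : ℕ) :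
    ∑ i ∈ Icc 1 N, (u (i-1) - 2 * u i + u (i+1))^2 ≤ 4 * ∑ i ∈ Icc 1 (N+1), (u i - u (i-1))^2 := by
  calc ∑ i ∈ Icc 1 N, (u (i-1) - 2 * u i + u (i+1))^2
      ≤ ∑ i ∈ Icc 1 N, 2 * ((u i - u (i-1))^2 + (u (i+1) - u (i+1-1))^2) := by
        refine sum_le_sum fun i _ => ?_
        rw [Nat.add_sub_cancel]
        nlinarith [sq_nonneg (u (i+1) - u (i-1))]
    _ ≤ 4 * ∑ i ∈ Icc 1 (N+1), (u i - u (i-1))^2 := by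
        rw [← mul_sum]
        linarith [sum_add_succ_le_two_mul_sum (fun i => (u i - u (i-1))^2) (fun i => sq_nonneg _) N]

theorem sum_sq_diff_le {u : ℕ → ℝ} {N : ℕ} (h0 : u 0 = 0) (hN : u (N+1) = 0) :
    ∑ i ∈ Icc 1 (N+1), (u i - u (i-1))^2 ≤ 4 * ∑ i ∈ Icc 1 N, u i ^ 2 := by
  calc ∑ i ∈ Icc 1 (N+1), (u i - u (i-1))^2
      ≤ ∑ i ∈ Icc 1 (N+1), 2 * (u i ^ 2 + u (i-1) ^ 2) :=
        sum_le_sum fun i _ => by nlinarith [sq_nonneg (u i + u (i-1))]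
    _ = 4 * ∑ i ∈ Icc 1 N, u i ^ 2 := by
        simp only [sum_Icc_one_eq_sum_range, Nat.add_sub_cancel, ← mul_sum, sum_add_distrib]
        rw [sum_range_succ, sum_range_succ', hN, h0]
        ring

theorem sum_avg_mul_neg_secondDiff {u : ℕ → ℝ} {N : ℕ} (h0 : u 0 = 0) (hN : u (N+1) = 0) :
    ∑ i ∈ Icc 1 N, (u (i-1) + 10 * u i + u (i+1)) / 12 * -(u (i-1) - 2 * u i + u (i+1)) =
      ∑ i ∈ Icc 1 (N+1), (u i - u (i-1))^2 - (∑ i ∈ Icc 1 N, (u (i-1) - 2 * u i + u (i+1))^2) / 12 := by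
  have hpt : ∀ i, (u (i-1) + 10 * u i + u (i+1)) / 12 * -(u (i-1) - 2 * u i + u (i+1)) =
      -(u i * (u (i-1) - 2 * u i + u (i+1))) - (u (i-1) - 2 * u i + u (i+1))^2 / 12 :=
    fun i => by ring
  simp only [hpt, sum_sub_distrib, sum_neg_distrib, ← sum_div,
    sum_mul_secondDiff_eq_neg_sum_sq_diff h0 hN, neg_neg]

theorem sum_sq_avg {u : ℕ → ℝ} {N : ℕ} (h0 : u 0 = 0) (hN : u (N+1) = 0) :
    ∑ i ∈ Icc 1 N, ((u (i-1) + 10 * u i + u (i+1)) / 12)^2 =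
      ∑ i ∈ Icc 1 N, u i ^ 2 - (∑ i ∈ Icc 1 (N+1), (u i - u (i-1))^2) / 6 +
        (∑ i ∈ Icc 1 N, (u (i-1) - 2 * u i + u (i+1))^2) / 144 := by
  have hpt : ∀ i, ((u (i-1) + 10 * u i + u (i+1)) / 12)^2 =
      u i ^ 2 + u i * (u (i-1) - 2 * u i + u (i+1)) / 6 + (u (i-1) - 2 * u i + u (i+1))^2 / 144 :=
    fun i => by ring
  simp only [hpt, sum_add_distrib, ← sum_div, sum_mul_secondDiff_eq_neg_sum_sq_diff h0 hN]
  ring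

theorem stmt_13 (M : ℕ) (hM : 2 ≤ M) (h : ℝ) (hh : 0 < h)
    (u : ℕ → ℝ) (hu0 : u 0 = 0) (huM : u M = 0) :
    (2/3) * ((1/h) * ∑ i ∈ Finset.Icc 1 M, (u i - u (i-1))^2) ≤
      h * ∑ i ∈ Finset.Icc 1 (M-1),
        ((u (i-1) + 10 * u i + u (i+1)) / 12) *
          (-((u (i-1) - 2 * u i + u (i+1)) / h^2)) ∧
    h * ∑ i ∈ Finset.Icc 1 (M-1),
        ((u (i-1) + 10 * u i + u (i+1)) / 12) *
          (-((u (i-1) - 2 * u i + u (i+1)) / h^2)) ≤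
      (1/h) * ∑ i ∈ Finset.Icc 1 M, (u i - u (i-1))^2 ∧
    (1/3) * (h * ∑ i ∈ Finset.Icc 1 (M-1), (u i)^2) ≤
      h * ∑ i ∈ Finset.Icc 1 (M-1), ((u (i-1) + 10 * u i + u (i+1)) / 12)^2 ∧
    h * ∑ i ∈ Finset.Icc 1 (M-1), ((u (i-1) + 10 * u i + u (i+1)) / 12)^2 ≤
      h * ∑ i ∈ Finset.Icc 1 (M-1), (u i)^2 := by
  obtain ⟨N, rfl⟩ : ∃ N, M = N + 1 := ⟨M - 1, by omega⟩
  have h_scale : h * ∑ i ∈ Icc 1 N, (u (i-1) + 10 * u i + u (i+1)) / 12 *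
      -((u (i-1) - 2 * u i + u (i+1)) / h^2) =
      (1/h) * ∑ i ∈ Icc 1 N, (u (i-1) + 10 * u i + u (i+1)) / 12 * -(u (i-1) - 2 * u i + u (i+1)) := by
    simp only [mul_sum]
    exact sum_congr rfl fun i _ => by field_simp
  rw [Nat.add_sub_cancel, h_scale, sum_avg_mul_neg_secondDiff hu0 huM, sum_sq_avg hu0 huM]
  have hS2 := sum_sq_secondDiff_le u N
  have hS1 := sum_sq_diff_le hu0 huM
  have hS1_nonneg : 0 ≤ ∑ i ∈ Icc 1 (N+1), (u i - u (i-1))^2 := sum_nonneg fun i _ => sq_nonneg _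
  have hS2_nonneg : 0 ≤ ∑ i ∈ Icc 1 N, (u (i-1) - 2 * u i + u (i+1))^2 := sum_nonneg fun i _ => sq_nonneg _
  have hinv : 0 < 1 / h := by positivity
  refine ⟨?_, ?_, ?_, ?_⟩ <;> nlinarith
end

section
/- (Unique solvability of the discretized semilinear system) Let $M \geq 2$, $h > 0$, $\kappa > 0$, and let $B_0 > 0$ satisfy $B_0 \geq \frac{12\kappa}{h^2}$. Consider mesh functions $u, v$ on the grid with zero boundary values, the averaging operator $\mathscr{A}$ and second difference $\delta_x^2$ as above. If $(u, v)$ solves the homogeneous system $\mathscr{A}(B_0 u) = \kappa\, \delta_x^2(u^{\circ 3}) - \kappa\, \delta_x^2 u + \kappa\varepsilon^2 \delta_x^2 v$ and $\mathscr{A}v = -\delta_x^2 u$, where $u^{\circ 3}$ denotes elementwise cube, then $u \equiv 0$. -/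
set_option maxHeartbeats 1000000

private lemma abel_sum (n : ℕ) (a b : ℕ → ℝ) :
    ∑ i ∈ Finset.range (n+1), (a (i+1) - a i) * (b (i+1) - b i)
      = ∑ i ∈ Finset.range n, (2*a (i+1) - a i - a (i+2)) * b (i+1)
        + (a (n+1) - a n) * b (n+1) - (a 1 - a 0) * b 0 := by
  induction n with
  | zero => simp [Finset.sum_range_one]; ring
  | succ n ih =>
    rw [Finset.sum_range_succ, ih, Finset.sum_range_succ]
    ring

private lemma sbp (n : ℕ) (a b : ℕ → ℝ) (hb0 : b 0 = 0) (hbn : b (n+1) = 0) :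
    ∑ i ∈ Finset.range n, (2*a (i+1) - a i - a (i+2)) * b (i+1)
      = ∑ i ∈ Finset.range (n+1), (a (i+1) - a i) * (b (i+1) - b i) := by
  rw [abel_sum, hb0, hbn]; ring

private lemma inv_ineq (n : ℕ) (b : ℕ → ℝ) (hb0 : b 0 = 0) (hbn : b (n+2) = 0) :
    ∑ i ∈ Finset.range (n+2), (b (i+1) - b i) * (b (i+1) - b i)
      ≤ 4 * ∑ i ∈ Finset.range (n+1), b (i+1) * b (i+1) := by
  have h1 : ∀ i ∈ Finset.range (n+2),
      (b (i+1) - b i) * (b (i+1) - b i) ≤ 2*(b (i+1)*b (i+1)) + 2*(b i * b i) := by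
    intro i _; nlinarith [sq_nonneg (b (i+1) + b i)]
  have h2 := Finset.sum_le_sum h1
  have e1 : ∑ i ∈ Finset.range (n+2), b (i+1) * b (i+1)
      = ∑ i ∈ Finset.range (n+1), b (i+1) * b (i+1) := by
    rw [Finset.sum_range_succ, hbn]; ring
  have e2 : ∑ i ∈ Finset.range (n+2), b i * b i
      = ∑ i ∈ Finset.range (n+1), b (i+1) * b (i+1) := by
    rw [Finset.sum_range_succ', hb0]; ring
  have h3 : ∑ i ∈ Finset.range (n+2), (2*(b (i+1)*b (i+1)) + 2*(b i * b i))
      = 4 * ∑ i ∈ Finset.range (n+1), b (i+1) * b (i+1) := by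
    rw [Finset.sum_add_distrib, ← Finset.mul_sum, ← Finset.mul_sum, e1, e2]; ring
  linarith [h2, h3.le, h3.ge]

private lemma cube_mono (x y : ℝ) : 0 ≤ (x^3 - y^3) * (x - y) := by
  nlinarith [sq_nonneg (x^2 - y^2), sq_nonneg (x*(x-y)), sq_nonneg (y*(x-y))]

theorem stmt_19 (M : ℕ) (hM : 2 ≤ M) (h κ ε B0 : ℝ)
    (hh : 0 < h) (hκ : 0 < κ) (hε : 0 < ε) (hB0 : 0 < B0)
    (hB : 12 * κ / h^2 ≤ B0)
    (u v : ℕ → ℝ)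
    (hu0 : u 0 = 0) (huM : u M = 0) (hv0 : v 0 = 0) (hvM : v M = 0)
    (heq1 : ∀ i, 1 ≤ i → i ≤ M - 1 →
      (B0 * u (i-1) + 10 * (B0 * u i) + B0 * u (i+1)) / 12 =
        κ * (((u (i-1))^3 - 2 * (u i)^3 + (u (i+1))^3) / h^2)
        - κ * ((u (i-1) - 2 * u i + u (i+1)) / h^2)
        + κ * ε^2 * ((v (i-1) - 2 * v i + v (i+1)) / h^2))
    (heq2 : ∀ i, 1 ≤ i → i ≤ M - 1 →
      (v (i-1) + 10 * v i + v (i+1)) / 12 = -((u (i-1) - 2 * u i + u (i+1)) / h^2)) :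
    ∀ i, i ≤ M → u i = 0 := by
  obtain ⟨n, rfl⟩ : ∃ n, M = n + 2 := ⟨M - 2, by omega⟩
  have hh2 : (0:ℝ) < h^2 := by positivity
  -- energy identity from eq1: multiply by u (i+1) and sum over interior points
  have E1 : ∑ i ∈ Finset.range (n+1),
        ((B0 * u i + 10 * (B0 * u (i+1)) + B0 * u (i+2)) / 12) * u (i+1)
      = ∑ i ∈ Finset.range (n+1),
        (κ * (((u i)^3 - 2 * (u (i+1))^3 + (u (i+2))^3) / h^2)
          - κ * ((u i - 2 * u (i+1) + u (i+2)) / h^2)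
          + κ * ε^2 * ((v i - 2 * v (i+1) + v (i+2)) / h^2)) * u (i+1) := by
    refine Finset.sum_congr rfl fun i hi => ?_
    have hi' : i < n+1 := Finset.mem_range.mp hi
    have h1 := heq1 (i+1) (by omega) (by omega)
    simp only [Nat.add_sub_cancel, show i+1+1 = i+2 from rfl] at h1
    rw [h1]
  have l1 : ∑ i ∈ Finset.range (n+1),
        ((B0 * u i + 10 * (B0 * u (i+1)) + B0 * u (i+2)) / 12) * u (i+1)
      = B0 * (∑ i ∈ Finset.range (n+1), u (i+1) * u (i+1))
        - (B0/12) * (∑ i ∈ Finset.range (n+1), (2*u (i+1) - u i - u (i+2)) * u (i+1)) := by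
    simp only [Finset.mul_sum, ← Finset.sum_sub_distrib]
    exact Finset.sum_congr rfl fun i _ => by ring
  have l2 : ∑ i ∈ Finset.range (n+1),
        (κ * (((u i)^3 - 2 * (u (i+1))^3 + (u (i+2))^3) / h^2)
          - κ * ((u i - 2 * u (i+1) + u (i+2)) / h^2)
          + κ * ε^2 * ((v i - 2 * v (i+1) + v (i+2)) / h^2)) * u (i+1)
      = (-(κ/h^2)) * (∑ i ∈ Finset.range (n+1),
            (2*(fun j => (u j)^3) (i+1) - (fun j => (u j)^3) i - (fun j => (u j)^3) (i+2)) * u (i+1))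
        + (κ/h^2) * (∑ i ∈ Finset.range (n+1), (2*u (i+1) - u i - u (i+2)) * u (i+1))
        - (κ*ε^2/h^2) * (∑ i ∈ Finset.range (n+1), (2*v (i+1) - v i - v (i+2)) * u (i+1)) := by
    simp only [Finset.mul_sum, ← Finset.sum_add_distrib, ← Finset.sum_sub_distrib]
    exact Finset.sum_congr rfl fun i _ => by ring
  -- summation by parts
  have s1 : ∑ i ∈ Finset.range (n+1), (2*u (i+1) - u i - u (i+2)) * u (i+1)
      = ∑ i ∈ Finset.range (n+2), (u (i+1) - u i) * (u (i+1) - u i) :=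
    sbp (n+1) u u hu0 huM
  have s2 : ∑ i ∈ Finset.range (n+1),
        (2*(fun j => (u j)^3) (i+1) - (fun j => (u j)^3) i - (fun j => (u j)^3) (i+2)) * u (i+1)
      = ∑ i ∈ Finset.range (n+2), ((u (i+1))^3 - (u i)^3) * (u (i+1) - u i) :=
    sbp (n+1) (fun j => (u j)^3) u hu0 huM
  have s3 : ∑ i ∈ Finset.range (n+1), (2*v (i+1) - v i - v (i+2)) * u (i+1)
      = ∑ i ∈ Finset.range (n+2), (v (i+1) - v i) * (u (i+1) - u i) :=
    sbp (n+1) v u hu0 huM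
  have s4 : ∑ i ∈ Finset.range (n+1), (2*u (i+1) - u i - u (i+2)) * v (i+1)
      = ∑ i ∈ Finset.range (n+2), (u (i+1) - u i) * (v (i+1) - v i) :=
    sbp (n+1) u v hv0 hvM
  have s5 : ∑ i ∈ Finset.range (n+2), (v (i+1) - v i) * (u (i+1) - u i)
      = ∑ i ∈ Finset.range (n+2), (u (i+1) - u i) * (v (i+1) - v i) :=
    Finset.sum_congr rfl fun i _ => mul_comm _ _
  have s6 : ∑ i ∈ Finset.range (n+1), (2*v (i+1) - v i - v (i+2)) * v (i+1)
      = ∑ i ∈ Finset.range (n+2), (v (i+1) - v i) * (v (i+1) - v i) :=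
    sbp (n+1) v v hv0 hvM
  -- use eq2 to express the cross term
  have e2 : ∑ i ∈ Finset.range (n+1), (2*u (i+1) - u i - u (i+2)) * v (i+1)
      = h^2 * (∑ i ∈ Finset.range (n+1), v (i+1) * v (i+1))
        - (h^2/12) * (∑ i ∈ Finset.range (n+1), (2*v (i+1) - v i - v (i+2)) * v (i+1)) := by
    have step : ∀ i ∈ Finset.range (n+1), (2*u (i+1) - u i - u (i+2)) * v (i+1)
        = h^2 * (v (i+1) * v (i+1)) - (h^2/12) * ((2*v (i+1) - v i - v (i+2)) * v (i+1)) := by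
      intro i hi
      have hi' : i < n+1 := Finset.mem_range.mp hi
      have h2 := heq2 (i+1) (by omega) (by omega)
      simp only [Nat.add_sub_cancel, show i+1+1 = i+2 from rfl] at h2
      have h2' : (u i - 2 * u (i+1) + u (i+2)) / h ^ 2
          = -((v i + 10 * v (i+1) + v (i+2)) / 12) := by linarith
      rw [div_eq_iff (ne_of_gt hh2)] at h2'
      have hu2 : 2*u (i+1) - u i - u (i+2)
          = h ^ 2 * ((v i + 10 * v (i+1) + v (i+2)) / 12) := by linear_combination -h2'
      rw [hu2]; ring
    rw [Finset.sum_congr rfl step]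
    simp only [Finset.sum_sub_distrib, ← Finset.mul_sum]
  -- cross term is nonnegative
  have hNv : (0:ℝ) ≤ ∑ i ∈ Finset.range (n+1), v (i+1) * v (i+1) :=
    Finset.sum_nonneg fun i _ => mul_self_nonneg _
  have hDv4 : ∑ i ∈ Finset.range (n+2), (v (i+1) - v i) * (v (i+1) - v i)
      ≤ 4 * ∑ i ∈ Finset.range (n+1), v (i+1) * v (i+1) := inv_ineq n v hv0 hvM
  have hVU : (0:ℝ) ≤ ∑ i ∈ Finset.range (n+2), (v (i+1) - v i) * (u (i+1) - u i) := by
    rw [s5, ← s4, e2, s6]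
    nlinarith [mul_le_mul_of_nonneg_left hDv4 (le_of_lt (by positivity : (0:ℝ) < h^2/12)),
      mul_nonneg (sq_nonneg h) hNv]
  -- assemble the main inequality
  have main := (l1.symm.trans E1).trans l2
  rw [s1, s2, s3] at main
  set Nu := ∑ i ∈ Finset.range (n+1), u (i+1) * u (i+1) with hNudef
  set Du := ∑ i ∈ Finset.range (n+2), (u (i+1) - u i) * (u (i+1) - u i) with hDudef
  set Q := ∑ i ∈ Finset.range (n+2), ((u (i+1))^3 - (u i)^3) * (u (i+1) - u i) with hQdef
  set VU := ∑ i ∈ Finset.range (n+2), (v (i+1) - v i) * (u (i+1) - u i) with hVUdef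
  clear_value Nu Du Q VU
  -- nonnegativity facts
  have hNu : (0:ℝ) ≤ Nu := hNudef ▸ Finset.sum_nonneg fun i _ => mul_self_nonneg _
  have hQ : (0:ℝ) ≤ Q := hQdef ▸ Finset.sum_nonneg fun (i : ℕ) _ => cube_mono (u (i+1)) (u i)
  have hVU' : (0:ℝ) ≤ VU := hVUdef ▸ hVU
  have hDu4 : Du ≤ 4 * Nu := by rw [hDudef, hNudef]; exact inv_ineq n u hu0 huM
  have hc : (0:ℝ) < κ/h^2 := div_pos hκ hh2
  have hcB : κ/h^2 ≤ B0/12 := by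
    rw [div_le_iff₀ hh2] at hB ⊢
    nlinarith
  have m1 : (κ/h^2) * Du ≤ (κ/h^2) * (4 * Nu) := mul_le_mul_of_nonneg_left hDu4 hc.le
  have m2 : (B0/12) * Du ≤ (B0/12) * (4 * Nu) := mul_le_mul_of_nonneg_left hDu4 (by positivity)
  have m3 : (κ/h^2) * (4 * Nu) ≤ (B0/12) * (4 * Nu) :=
    mul_le_mul_of_nonneg_right hcB (by linarith)
  have m4 : (0:ℝ) ≤ (κ/h^2) * Q := mul_nonneg hc.le hQ
  have m5 : (0:ℝ) ≤ (κ*ε^2/h^2) * VU := mul_nonneg (by positivity) hVU'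
  have key : B0 * Nu ≤ (2*B0/3) * Nu := by linarith [main, m1, m2, m3, m4, m5]
  have hNu0 : Nu ≤ 0 := by
    by_contra hcon
    push_neg at hcon
    nlinarith [key, mul_pos hB0 hcon]
  have hz : ∀ i ∈ Finset.range (n+1), u (i+1) * u (i+1) = 0 :=
    (Finset.sum_eq_zero_iff_of_nonneg fun i _ => mul_self_nonneg _).mp
      (hNudef ▸ le_antisymm hNu0 hNu)
  intro i hiM
  rcases Nat.eq_zero_or_pos i with h0 | h1
  · rw [h0]; exact hu0
  · rcases eq_or_lt_of_le hiM with hE | hlt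
    · rw [hE]; exact huM
    · obtain ⟨j, rfl⟩ : ∃ j, i = j + 1 := ⟨i - 1, by omega⟩
      exact mul_self_eq_zero.mp (hz j (Finset.mem_range.mpr (by omega)))
end
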